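/- arXiv:2003.04950 — 4 statements merged into one kernel-verified Lean document; each statement's English description precedes it below -/
import Mathlib

section
/- Let x : ℝ → ℝⁿ be a continuously differentiable curve, let D ⊆ ℝⁿ be an open set containing the image of x, let f : D → ℝⁿ and g : D → ℝⁿˣᵐ be locally Lipschitz vector fields, let u : D → ℝᵐ be a continuous feedback control, and suppose x solves the closed-loop ODE ẋ(t) = f(x(t)) + g(x(t))·u(x(t)) for all t ≥ 0. Let h : D → ℝ be continuously differentiable and let α : ℝ → ℝ be a locally Lipschitz extended class 𝒦 function (strictly increasing with α(0) = 0). If for every y ∈ D the feedback satisfies the zeroing control barrier function constraint Dh(y)[f(y) + g(y)·u(y)] + α(h(y)) ≥ 0, and h(x(0)) ≥ 0, then h(x(t)) ≥ 0 for all t ≥ 0; i.e., the safe set C = {y ∈ D : h(y) ≥ 0} is forward invariant along x. -/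
open Topology Set

/-!
Along the trajectory, `w = h ∘ x` satisfies `w' ≥ -α(w)`. Wherever `w < 0` we have `α(w) < 0`,
so `w' > 0` there. If `w` were negative at some time `t`, then on the interval after the last
time `s ≤ t` with `w(s) ≥ 0` it would be strictly increasing, forcing `w(t) > w(s) ≥ 0`.
-/

theorem nonneg_of_hasDerivAt_of_add_nonneg {w w' α : ℝ → ℝ} {a t : ℝ}
    (hα : ∀ y < 0, α y < 0) (hw : ∀ τ, a ≤ τ → HasDerivAt w (w' τ) τ)
    (hbarrier : ∀ τ, a ≤ τ → 0 ≤ w' τ + α (w τ)) (ha : 0 ≤ w a) (ht : a ≤ t) : 0 ≤ w t := by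
  by_contra! hwt
  have hcont : ContinuousOn w (Icc a t) := fun τ hτ =>
    (hw τ hτ.1).continuousAt.continuousWithinAt
  set S := Icc a t ∩ w ⁻¹' Ici 0
  have hS_closed : IsClosed S := hcont.preimage_isClosed_of_isClosed isClosed_Icc isClosed_Ici
  have hS_bdd : BddAbove S := bddAbove_Icc.mono inter_subset_left
  obtain ⟨⟨has, hst⟩, hws⟩ : sSup S ∈ S := hS_closed.csSup_mem ⟨a, ⟨le_rfl, ht⟩, ha⟩ hS_bdd
  set s := sSup S
  have hneg_after : ∀ τ ∈ Ioc s t, w τ < 0 := fun τ hτ => by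
    by_contra! hwτ
    exact (le_csSup hS_bdd ⟨⟨has.trans hτ.1.le, hτ.2⟩, hwτ⟩).not_gt hτ.1
  have hst' : s < t := hst.lt_of_ne fun hs => hwt.not_ge (hs ▸ hws)
  have hmono : StrictMonoOn w (Icc s t) :=
    strictMonoOn_of_deriv_pos (convex_Icc s t) (hcont.mono (Icc_subset_Icc_left has))
      fun τ hτ => by
        rw [interior_Icc] at hτ
        have hτa : a ≤ τ := has.trans hτ.1.le
        rw [(hw τ hτa).deriv]
        linarith [hbarrier τ hτa, hα _ (hneg_after τ ⟨hτ.1, hτ.2.le⟩)]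
  linarith [hmono ⟨le_rfl, hst⟩ ⟨hst, le_rfl⟩ hst', show (0 : ℝ) ≤ w s from hws]

theorem zcbf_forward_invariance_general
    {n m : ℕ}
    (x : ℝ → EuclideanSpace ℝ (Fin n))
    (D : Set (EuclideanSpace ℝ (Fin n)))
    (hD : IsOpen D)
    (hximg : ∀ t : ℝ, x t ∈ D)
    (f : EuclideanSpace ℝ (Fin n) → EuclideanSpace ℝ (Fin n))
    (g : EuclideanSpace ℝ (Fin n) →
      (EuclideanSpace ℝ (Fin m) →L[ℝ] EuclideanSpace ℝ (Fin n)))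
    (u : EuclideanSpace ℝ (Fin n) → EuclideanSpace ℝ (Fin m))
    (hx_ode : ∀ t : ℝ, 0 ≤ t → HasDerivAt x (f (x t) + g (x t) (u (x t))) t)
    (h : EuclideanSpace ℝ (Fin n) → ℝ)
    (hh_smooth : ContDiffOn ℝ 1 h D)
    (α : ℝ → ℝ)
    (hα_mono : StrictMono α)
    (hα_zero : α 0 = 0)
    (h_zcbf : ∀ y ∈ D, fderiv ℝ h y (f y + g y (u y)) + α (h y) ≥ 0)
    (h_init : h (x 0) ≥ 0) :
    ∀ t : ℝ, 0 ≤ t → h (x t) ≥ 0 := by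
  intro t ht
  have hα_neg : ∀ y < 0, α y < 0 := fun y hy => hα_zero ▸ hα_mono hy
  have hh_diff : ∀ y ∈ D, DifferentiableAt ℝ h y := fun y hy =>
    (hh_smooth.differentiableOn one_ne_zero).differentiableAt (hD.mem_nhds hy)
  have hw : ∀ τ, 0 ≤ τ →
      HasDerivAt (fun τ => h (x τ)) (fderiv ℝ h (x τ) (f (x τ) + g (x τ) (u (x τ)))) τ :=
    fun τ hτ => (hh_diff _ (hximg τ)).hasFDerivAt.comp_hasDerivAt τ (hx_ode τ hτ)
  exact nonneg_of_hasDerivAt_of_add_nonneg hα_neg hw (fun τ _ => h_zcbf _ (hximg τ)) h_init ht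

/-- **Forward invariance of the safe set under a ZCBF-admissible feedback (Theorem 1).**
Let `x : ℝ → ℝⁿ` be a continuously differentiable curve, `D ⊆ ℝⁿ` an open set containing
the image of `x`, `f : D → ℝⁿ` and `g : D → ℝⁿˣᵐ` locally Lipschitz vector fields,
`u : D → ℝᵐ` a continuous feedback, and suppose `x` solves the closed-loop ODE
`ẋ(t) = f(x(t)) + g(x(t))·u(x(t))` for all `t ≥ 0`.  Let `h : D → ℝ` be continuously
differentiable and `α : ℝ → ℝ` a locally Lipschitz extended class-𝒦 function.  If the
ZCBF constraint `Dh(y)[f(y) + g(y)·u(y)] + α(h(y)) ≥ 0` holds for every `y ∈ D` and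
`h(x(0)) ≥ 0`, then `h(x(t)) ≥ 0` for all `t ≥ 0`. -/
theorem zcbf_forward_invariance
    {n m : ℕ}
    (x : ℝ → EuclideanSpace ℝ (Fin n))
    (D : Set (EuclideanSpace ℝ (Fin n)))
    (hD : IsOpen D)
    (hximg : ∀ t : ℝ, x t ∈ D)
    (f : EuclideanSpace ℝ (Fin n) → EuclideanSpace ℝ (Fin n))
    (g : EuclideanSpace ℝ (Fin n) →
      (EuclideanSpace ℝ (Fin m) →L[ℝ] EuclideanSpace ℝ (Fin n)))
    (u : EuclideanSpace ℝ (Fin n) → EuclideanSpace ℝ (Fin m))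
    (hf_lip : ∀ y ∈ D, ∃ K : NNReal, ∃ s ∈ 𝓝[D] y, LipschitzOnWith K f s)
    (hg_lip : ∀ y ∈ D, ∃ K : NNReal, ∃ s ∈ 𝓝[D] y, LipschitzOnWith K g s)
    (hu_cont : ContinuousOn u D)
    (hx_smooth : ContDiff ℝ 1 x)
    (hx_ode : ∀ t : ℝ, 0 ≤ t → HasDerivAt x (f (x t) + g (x t) (u (x t))) t)
    (h : EuclideanSpace ℝ (Fin n) → ℝ)
    (hh_smooth : ContDiffOn ℝ 1 h D)
    (α : ℝ → ℝ)
    (hα_lip : LocallyLipschitz α)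
    (hα_mono : StrictMono α)
    (hα_zero : α 0 = 0)
    (h_zcbf : ∀ y ∈ D, fderiv ℝ h y (f y + g y (u y)) + α (h y) ≥ 0)
    (h_init : h (x 0) ≥ 0) :
    ∀ t : ℝ, 0 ≤ t → h (x t) ≥ 0 :=
  zcbf_forward_invariance_general x D hD hximg f g u hx_ode h hh_smooth α hα_mono hα_zero h_zcbf
    h_init
end

section
/- Safety of the learned barrier controller: let x : ℝ → ℝⁿ be a continuously differentiable curve, let D ⊆ ℝⁿ be an open set containing the image of x, let f : D → ℝⁿ and g : D → ℝⁿˣᵐ be locally Lipschitz, let ĥ : D → ℝ be continuously differentiable (the synthesized barrier function), and let α : ℝ → ℝ be a locally Lipschitz extended class 𝒦 function. Suppose x solves ẋ(t) = f(x(t)) + g(x(t))·u(x(t)) where the continuous control u : D → ℝᵐ satisfies Dĥ(y)[f(y) + g(y)·u(y)] ≥ -α(ĥ(y)) for all y ∈ D. Let S ⊆ D (the true unsafe region) satisfy S ⊆ Ŝ, where Ŝ = {y ∈ D : ĥ(y) ≤ 0} is the estimated unsafe region, and suppose moreover S ∩ {y ∈ D : ĥ(y) = 0} = ∅ (the estimate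 strictly over-approximates S). If ĥ(x(0)) ≥ 0, then ĥ(x(t)) ≥ 0 for all t ≥ 0, and consequently x(t) ∉ S for all t ≥ 0. -/
/-!
Along the closed-loop trajectory, `w t = ĥ (x t)` satisfies `w' ≥ -α (w)`, and `-α (w) > 0`
wherever `w < 0`. So `w` cannot cross below zero: after the last time `T ≤ b` with `w T ≥ 0`,
the mean value theorem on `[T, b]` would need a negative slope at a point where `w' > 0`.
Since `S ⊆ {ĥ ≤ 0}` misses `{ĥ = 0}`, the trajectory then stays out of `S`.
-/

open Set Topology

theorem nonneg_of_hasDerivAt_pos_of_neg {w w' : ℝ → ℝ} {a : ℝ}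
    (hderiv : ∀ t ∈ Ici a, HasDerivAt w (w' t) t)
    (hpos : ∀ t ∈ Ici a, w t < 0 → 0 < w' t) (ha : 0 ≤ w a) :
    ∀ t ∈ Ici a, 0 ≤ w t := by
  intro b hb
  by_contra! hwb
  have hcont : ContinuousOn w (Icc a b) := fun t ht =>
    (hderiv t ht.1).continuousAt.continuousWithinAt
  have hA : IsCompact (Icc a b ∩ w ⁻¹' Ici 0) :=
    isCompact_Icc.of_isClosed_subset
      (hcont.preimage_isClosed_of_isClosed isClosed_Icc isClosed_Ici) inter_subset_left
  obtain ⟨T, ⟨⟨haT, hTb⟩, hwT⟩, hT_last⟩ := hA.exists_isGreatest ⟨a, ⟨le_rfl, hb⟩, ha⟩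
  have hTb' : T < b := hTb.lt_of_ne (by rintro rfl; exact (not_le.2 hwb) hwT)
  obtain ⟨c, ⟨hTc, hcb⟩, hslope⟩ := exists_hasDerivAt_eq_slope w w' hTb'
    (hcont.mono (Icc_subset_Icc_left haT)) fun t ht => hderiv t (haT.trans ht.1.le)
  have hwc : w c < 0 := by
    by_contra! hwc
    exact (not_le.2 hTc) (hT_last ⟨⟨haT.trans hTc.le, hcb.le⟩, hwc⟩)
  have hneg : (w b - w T) / (b - T) < 0 :=
    div_neg_of_neg_of_pos (by linarith [show (0 : ℝ) ≤ w T from hwT]) (sub_pos.2 hTb')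
  linarith [hpos c (haT.trans hTc.le) hwc]

theorem learned_barrier_controller_safety_general
    {n m : ℕ}
    (x : ℝ → EuclideanSpace ℝ (Fin n))
    (D : Set (EuclideanSpace ℝ (Fin n)))
    (hD : IsOpen D)
    (hximg : ∀ t : ℝ, x t ∈ D)
    (f : EuclideanSpace ℝ (Fin n) → EuclideanSpace ℝ (Fin n))
    (g : EuclideanSpace ℝ (Fin n) →
      (EuclideanSpace ℝ (Fin m) →L[ℝ] EuclideanSpace ℝ (Fin n)))
    (u : EuclideanSpace ℝ (Fin n) → EuclideanSpace ℝ (Fin m))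
    (hhat : EuclideanSpace ℝ (Fin n) → ℝ)
    (hhhat_smooth : ContDiffOn ℝ 1 hhat D)
    (α : ℝ → ℝ)
    (hα_mono : StrictMono α)
    (hα_zero : α 0 = 0)
    (hx_ode : ∀ t : ℝ, 0 ≤ t → HasDerivAt x (f (x t) + g (x t) (u (x t))) t)
    (h_constraint : ∀ y ∈ D, fderiv ℝ hhat y (f y + g y (u y)) ≥ -α (hhat y))
    (S : Set (EuclideanSpace ℝ (Fin n)))
    (hS_sub : S ⊆ {y ∈ D | hhat y ≤ 0})
    (hS_strict : S ∩ {y ∈ D | hhat y = 0} = ∅)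
    (h_init : hhat (x 0) ≥ 0) :
    ∀ t : ℝ, 0 ≤ t → hhat (x t) ≥ 0 ∧ x t ∉ S := by
  have hderiv : ∀ t ∈ Ici (0 : ℝ),
      HasDerivAt (hhat ∘ x) (fderiv ℝ hhat (x t) (f (x t) + g (x t) (u (x t)))) t :=
    fun t ht => ((hhhat_smooth.contDiffAt (hD.mem_nhds (hximg t))).differentiableAt
      one_ne_zero).hasFDerivAt.comp_hasDerivAt t (hx_ode t ht)
  have hpos : ∀ t ∈ Ici (0 : ℝ), hhat (x t) < 0 →
      0 < fderiv ℝ hhat (x t) (f (x t) + g (x t) (u (x t))) := fun t _ hneg =>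
    (neg_pos.2 (hα_zero ▸ hα_mono hneg)).trans_le (h_constraint (x t) (hximg t))
  have hnonneg := nonneg_of_hasDerivAt_pos_of_neg hderiv hpos h_init
  intro t ht
  refine ⟨hnonneg t ht, fun hxS => ?_⟩
  exact eq_empty_iff_forall_notMem.1 hS_strict (x t)
    ⟨hxS, hximg t, le_antisymm (hS_sub hxS).2 (hnonneg t ht)⟩

/-- **Safety of the learned barrier controller (Theorem 2).**
Let `x : ℝ → ℝⁿ` be a continuously differentiable curve, `D ⊆ ℝⁿ` open containing the
image of `x`, `f` and `g` locally Lipschitz, `hhat : D → ℝ` continuously differentiable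
(the synthesized barrier function), and `α` a locally Lipschitz extended class-𝒦
function.  Suppose `x` solves `ẋ = f(x) + g(x)·u(x)` where the continuous control `u`
satisfies `Dhhat(y)[f(y) + g(y)·u(y)] ≥ -α(hhat(y))` on `D`.  Let `S ⊆ D` satisfy `S ⊆ Ŝ`
where `Ŝ = {y ∈ D : hhat(y) ≤ 0}`, and suppose `S ∩ {y ∈ D : hhat(y) = 0} = ∅`.
If `hhat(x(0)) ≥ 0` then `hhat(x(t)) ≥ 0` for all `t ≥ 0`, and consequently `x(t) ∉ S`. -/
theorem learned_barrier_controller_safety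
    {n m : ℕ}
    (x : ℝ → EuclideanSpace ℝ (Fin n))
    (D : Set (EuclideanSpace ℝ (Fin n)))
    (hD : IsOpen D)
    (hximg : ∀ t : ℝ, x t ∈ D)
    (f : EuclideanSpace ℝ (Fin n) → EuclideanSpace ℝ (Fin n))
    (g : EuclideanSpace ℝ (Fin n) →
      (EuclideanSpace ℝ (Fin m) →L[ℝ] EuclideanSpace ℝ (Fin n)))
    (u : EuclideanSpace ℝ (Fin n) → EuclideanSpace ℝ (Fin m))
    (hf_lip : ∀ y ∈ D, ∃ K : NNReal, ∃ s ∈ 𝓝[D] y, LipschitzOnWith K f s)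
    (hg_lip : ∀ y ∈ D, ∃ K : NNReal, ∃ s ∈ 𝓝[D] y, LipschitzOnWith K g s)
    (hu_cont : ContinuousOn u D)
    (hhat : EuclideanSpace ℝ (Fin n) → ℝ)
    (hhhat_smooth : ContDiffOn ℝ 1 hhat D)
    (α : ℝ → ℝ)
    (hα_lip : LocallyLipschitz α)
    (hα_mono : StrictMono α)
    (hα_zero : α 0 = 0)
    (hx_smooth : ContDiff ℝ 1 x)
    (hx_ode : ∀ t : ℝ, 0 ≤ t → HasDerivAt x (f (x t) + g (x t) (u (x t))) t)
    (h_constraint : ∀ y ∈ D, fderiv ℝ hhat y (f y + g y (u y)) ≥ -α (hhat y))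
    (S : Set (EuclideanSpace ℝ (Fin n)))
    (hS_sub_D : S ⊆ D)
    (hS_sub : S ⊆ {y ∈ D | hhat y ≤ 0})
    (hS_strict : S ∩ {y ∈ D | hhat y = 0} = ∅)
    (h_init : hhat (x 0) ≥ 0) :
    ∀ t : ℝ, 0 ≤ t → hhat (x t) ≥ 0 ∧ x t ∉ S :=
  learned_barrier_controller_safety_general x D hD hximg f g u hhat hhhat_smooth α hα_mono hα_zero
    hx_ode h_constraint S hS_sub hS_strict h_init
end

section
/- Continuity of the QP-based controller: let D ⊆ ℝⁿ, let a : D → ℝᵐ, b : D → ℝ, and k : D → ℝᵐ be continuous, and suppose a(x) ≠ 0 for all x ∈ D. Then the map u* : D → ℝᵐ defined by u*(x) = k(x) + (max(0, b(x) - ⟨a(x), k(x)⟩)/‖a(x)‖²) · a(x), which for each x is the unique minimizer of u ↦ ‖u - k(x)‖² over the half-space {u : ⟨a(x), u⟩ ≥ b(x)}, is continuous on D. -/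
open RealInnerProductSpace

/-- **Continuity of the QP-based controller.**
Let `a : D → ℝᵐ`, `b : D → ℝ`, `k : D → ℝᵐ` be continuous on `D`, with `a x ≠ 0` for
all `x ∈ D`.  Then the map `u*(x) = k(x) + (max 0 (b(x) - ⟨a(x), k(x)⟩) / ‖a(x)‖²) • a(x)`,
which for each `x ∈ D` is the unique minimizer of `u ↦ ‖u - k(x)‖²` over the half-space
`{u : ⟨a(x), u⟩ ≥ b(x)}`, is continuous on `D`. -/
theorem qp_controller_continuous
    {n m : ℕ}
    (D : Set (EuclideanSpace ℝ (Fin n)))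
    (a : EuclideanSpace ℝ (Fin n) → EuclideanSpace ℝ (Fin m))
    (b : EuclideanSpace ℝ (Fin n) → ℝ)
    (k : EuclideanSpace ℝ (Fin n) → EuclideanSpace ℝ (Fin m))
    (ha_cont : ContinuousOn a D)
    (hb_cont : ContinuousOn b D)
    (hk_cont : ContinuousOn k D)
    (ha_ne : ∀ x ∈ D, a x ≠ 0)
    (ustar : EuclideanSpace ℝ (Fin n) → EuclideanSpace ℝ (Fin m))
    (hustar : ∀ x,
      ustar x = k x + (max 0 (b x - ⟪a x, k x⟫) / ‖a x‖ ^ 2) • a x) :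
    (∀ x ∈ D,
      ⟪a x, ustar x⟫ ≥ b x ∧
      ∀ u : EuclideanSpace ℝ (Fin m), ⟪a x, u⟫ ≥ b x → u ≠ ustar x →
        ‖ustar x - k x‖ ^ 2 < ‖u - k x‖ ^ 2) ∧
    ContinuousOn ustar D := by

  constructor
  · intro x hx
    have ha0 : a x ≠ 0 := ha_ne x hx
    have hpos : (0:ℝ) < ‖a x‖ ^ 2 := by
      have h := norm_pos_iff.mpr ha0
      positivity
    set c := b x - ⟪a x, k x⟫ with hc
    set lam := max 0 c / ‖a x‖ ^ 2 with hlam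
    have hlam0 : 0 ≤ lam := div_nonneg (le_max_left _ _) hpos.le
    have hAA : ⟪a x, a x⟫ = ‖a x‖ ^ 2 := real_inner_self_eq_norm_sq (a x)
    have hus : ustar x = k x + lam • a x := hustar x
    have hinner : ⟪a x, ustar x⟫ = ⟪a x, k x⟫ + lam * ‖a x‖ ^ 2 := by
      rw [hus, inner_add_right, real_inner_smul_right, hAA]
    have hlamnorm : lam * ‖a x‖ ^ 2 = max 0 c := by
      rw [hlam, div_mul_cancel₀]
      exact hpos.ne'
    constructor
    · rw [ge_iff_le, hinner, hlamnorm]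
      rcases le_or_gt c 0 with h | h
      · rw [max_eq_left h]; linarith
      · rw [max_eq_right h.le]; linarith
    · intro u hu hne
      have hdiff : ustar x - k x = lam • a x := by rw [hus]; abel
      have hcross : 0 ≤ lam * ⟪a x, u - ustar x⟫ := by
        rcases le_or_gt c 0 with h | h
        · have hz : lam = 0 := by rw [hlam, max_eq_left h, zero_div]
          simp [hz]
        · have heq : ⟪a x, ustar x⟫ = b x := by
            rw [hinner, hlamnorm, max_eq_right h.le]; linarith
          have hnn : 0 ≤ ⟪a x, u - ustar x⟫ := by
            rw [inner_sub_right, heq]; linarith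
          exact mul_nonneg hlam0 hnn
      have hexp : ‖u - k x‖ ^ 2
          = ‖u - ustar x‖ ^ 2 + 2 * (lam * ⟪a x, u - ustar x⟫) + ‖ustar x - k x‖ ^ 2 := by
        have hs : u - k x = (u - ustar x) + (ustar x - k x) := by abel
        rw [hs, norm_add_sq_real, hdiff, real_inner_smul_right,
          real_inner_comm (u - ustar x) (a x)]
      have hupos : 0 < ‖u - ustar x‖ ^ 2 := by
        have h := norm_pos_iff.mpr (sub_ne_zero.mpr hne)
        positivity
      linarith
  · have h1 : ContinuousOn (fun x => ⟪a x, k x⟫) D := ha_cont.inner hk_cont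
    have hne2 : ∀ x ∈ D, ‖a x‖ ^ 2 ≠ 0 := by
      intro x hx
      have h := norm_pos_iff.mpr (ha_ne x hx)
      positivity
    have h3 : ContinuousOn (fun x => max 0 (b x - ⟪a x, k x⟫) / ‖a x‖ ^ 2) D :=
      ((continuous_const.max continuous_id).comp_continuousOn (hb_cont.sub h1)).div (ha_cont.norm.pow 2) hne2
    have h4 := hk_cont.add (h3.smul ha_cont)
    have he : ustar = fun x => k x + (max 0 (b x - ⟪a x, k x⟫) / ‖a x‖ ^ 2) • a x :=
      funext hustar
    rw [he]
    exact h4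
end

section
/- Gaussian kernel interpolation of arbitrary labels: let σ > 0, let x₁, …, x_N be pairwise distinct points in ℝⁿ, and let y₁, …, y_N ∈ ℝ be arbitrary target values. Then there exist coefficients c₁, …, c_N ∈ ℝ such that the function f(x) = ∑_{j=1}^N c_j exp(-‖x - x_j‖²/σ²) satisfies f(x_i) = y_i for every i ∈ {1, …, N}. -/
/-!
The Gram matrix `K i j = exp (-‖x i - x j‖² / σ²)` is positive definite, hence invertible.
A product of two Gaussians centred at `u` and `v` is `exp (-‖u - v‖² / σ²)` times a Gaussian
centred at their midpoint, so for `g p = ∑ j, c j * exp (-2 ‖p - x j‖² / σ²)` the integral of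
`g²` is `cᵀ K c` times a positive Gaussian integral. If `g = 0`, multiplying by
`exp (2 ‖p‖² / σ²)` turns `g` into a combination of the characters `p ↦ exp ⟪p, 4 x j / σ²⟫`,
which are linearly independent by Dedekind's lemma; hence `c = 0`.
-/

open Real MeasureTheory Finset Function RealInnerProductSpace
open scoped Matrix

section

variable {V : Type*} [NormedAddCommGroup V] [InnerProductSpace ℝ V]

theorem linearIndependent_exp_inner {ι : Type*} {b : ι → V} (hb : Injective b) :
    LinearIndependent ℝ fun j (p : V) => rexp ⟪p, b j⟫ := by
  let χ : V → (Multiplicative V →* ℝ) := fun w =>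
    { toFun := fun m => rexp ⟪m.toAdd, w⟫
      map_one' := by simp
      map_mul' := fun _ _ => by simp [inner_add_left, exp_add] }
  have hχ : Injective χ := fun w w' h => by
    have h_inner : ⟪w - w', w⟫ = ⟪w - w', w'⟫ :=
      exp_injective (DFunLike.congr_fun h (Multiplicative.ofAdd (w - w')))
    rw [← sub_eq_zero, ← inner_self_eq_zero (𝕜 := ℝ), inner_sub_right, h_inner, sub_self]
  exact (linearIndependent_monoidHom (Multiplicative V) ℝ).comp (χ ∘ b) (hχ.comp hb)

theorem exp_neg_mul_norm_sub_sq (a : ℝ) (p u : V) :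
    rexp (-a * ‖p - u‖ ^ 2) =
      rexp (-a * ‖p‖ ^ 2) * rexp (-a * ‖u‖ ^ 2) * rexp ⟪p, (2 * a) • u⟫ := by
  rw [← exp_add, ← exp_add, norm_sub_sq_real, real_inner_smul_right]
  ring_nf

theorem exp_neg_mul_norm_sub_sq_mul (a : ℝ) (p u v : V) :
    rexp (-a * ‖p - u‖ ^ 2) * rexp (-a * ‖p - v‖ ^ 2) =
      rexp (-(a / 2) * ‖u - v‖ ^ 2) * rexp (-(2 * a) * ‖p - midpoint ℝ u v‖ ^ 2) := by
  have h := parallelogram_law_with_norm ℝ (p - u) (p - v)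
  rw [show p - u + (p - v) = (2 : ℝ) • (p - midpoint ℝ u v) by
      simp only [midpoint_eq_smul_add, invOf_eq_inv]; module,
    show p - u - (p - v) = v - u by abel, norm_smul, norm_sub_rev v] at h
  rw [← exp_add, ← exp_add]
  congr 1
  simp only [Real.norm_ofNat, mul_pow] at h
  linear_combination (a / 2) * h

variable {ι : Type*} [Fintype ι]

noncomputable def gaussianCombination (a : ℝ) (x : ι → V) (c : ι → ℝ) (p : V) : ℝ :=
  ∑ j, c j * rexp (-a * ‖p - x j‖ ^ 2)

theorem gaussianCombination_apply_eq_exp_mul_sum (a : ℝ) (x : ι → V) (c : ι → ℝ) (p : V) :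
    gaussianCombination a x c p =
      rexp (-a * ‖p‖ ^ 2) * ∑ j, c j * rexp (-a * ‖x j‖ ^ 2) * rexp ⟪p, (2 * a) • x j⟫ := by
  simp only [gaussianCombination, exp_neg_mul_norm_sub_sq a p, mul_sum]
  exact sum_congr rfl fun j _ => by ring

theorem eq_zero_of_gaussianCombination_eq_zero {a : ℝ} (ha : a ≠ 0) {x : ι → V}
    (hx : Injective x) {c : ι → ℝ} (h : gaussianCombination a x c = 0) : c = 0 := by
  have h_indep := linearIndependent_exp_inner (V := V) ((smul_right_injective V
    (mul_ne_zero two_ne_zero ha)).comp hx)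
  have h_coeff := Fintype.linearIndependent_iff.mp h_indep
    (fun j => c j * rexp (-a * ‖x j‖ ^ 2)) <| funext fun p => by
      have hp := congrFun h p
      rw [gaussianCombination_apply_eq_exp_mul_sum, Pi.zero_apply, mul_eq_zero] at hp
      simpa [Finset.sum_apply] using hp.resolve_left (exp_ne_zero _)
  funext j
  simpa [exp_ne_zero] using h_coeff j

theorem gaussianCombination_sq (a : ℝ) (x : ι → V) (c : ι → ℝ) (p : V) :
    gaussianCombination a x c p ^ 2 = ∑ i, ∑ j, c i * c j * rexp (-(a / 2) * ‖x i - x j‖ ^ 2) *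
      rexp (-(2 * a) * ‖p - midpoint ℝ (x i) (x j)‖ ^ 2) := by
  rw [gaussianCombination, sq, sum_mul_sum]
  refine sum_congr rfl fun i _ => sum_congr rfl fun j _ => ?_
  rw [mul_mul_mul_comm, exp_neg_mul_norm_sub_sq_mul]
  ring

noncomputable def gaussianGram (σ : ℝ) (x : ι → V) : Matrix ι ι ℝ :=
  Matrix.of fun i j => rexp (-(‖x i - x j‖ ^ 2 / σ ^ 2))

section Integral

variable [FiniteDimensional ℝ V] [MeasurableSpace V] [BorelSpace V]

theorem integrable_exp_neg_mul_sq_norm {b : ℝ} (hb : 0 < b) :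
    Integrable fun v : V => rexp (-b * ‖v‖ ^ 2) := by
  have h := GaussianFourier.integrable_cexp_neg_mul_sq_norm_add (b := (b : ℂ))
    (by simpa using hb) 0 (0 : V)
  refine h.norm.congr (.of_forall fun v => ?_)
  simp [Complex.norm_exp, ← Complex.ofReal_pow]

theorem integrable_gaussianCombination_sq {a : ℝ} (ha : 0 < a) (x : ι → V) (c : ι → ℝ) :
    Integrable fun p => gaussianCombination a x c p ^ 2 := by
  simp_rw [gaussianCombination_sq]
  exact integrable_finsetSum _ fun i _ => integrable_finsetSum _ fun j _ =>
    ((integrable_exp_neg_mul_sq_norm (by positivity)).comp_sub_right _).const_mul _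

theorem integral_gaussianCombination_sq {a : ℝ} (ha : 0 < a) (x : ι → V) (c : ι → ℝ) :
    ∫ p, gaussianCombination a x c p ^ 2 = (∫ v : V, rexp (-(2 * a) * ‖v‖ ^ 2)) *
      ∑ i, ∑ j, c i * c j * rexp (-(a / 2) * ‖x i - x j‖ ^ 2) := by
  have h_int (i j : ι) :=
    ((integrable_exp_neg_mul_sq_norm (V := V) (b := 2 * a) (by positivity)).comp_sub_right
      (midpoint ℝ (x i) (x j))).const_mul (c i * c j * rexp (-(a / 2) * ‖x i - x j‖ ^ 2))
  simp_rw [gaussianCombination_sq]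
  rw [integral_finsetSum _ fun i _ => integrable_finsetSum _ fun j _ => h_int i j, mul_sum]
  refine sum_congr rfl fun i _ => ?_
  rw [integral_finsetSum _ fun j _ => h_int i j, mul_sum]
  refine sum_congr rfl fun j _ => ?_
  rw [integral_const_mul, integral_sub_right_eq_self (fun v => rexp (-(2 * a) * ‖v‖ ^ 2)), mul_comm]

end Integral

theorem posDef_gaussianGram_of_finiteDimensional [FiniteDimensional ℝ V] {σ : ℝ} (hσ : σ ≠ 0)
    {x : ι → V} (hx : Injective x) : (gaussianGram σ x).PosDef := by
  borelize V
  have ha : 0 < 2 / σ ^ 2 := by positivity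
  refine Matrix.posDef_iff_dotProduct_mulVec.2 ⟨?_, fun c hc => ?_⟩
  · ext i j
    simp [gaussianGram, norm_sub_rev]
  have h_int_pos : 0 < ∫ v : V, rexp (-(2 * (2 / σ ^ 2)) * ‖v‖ ^ 2) := by
    rw [GaussianFourier.integral_rexp_neg_mul_sq_norm (by positivity)]
    positivity
  have h_form : star c ⬝ᵥ (gaussianGram σ x *ᵥ c) =
      (∫ p, gaussianCombination (2 / σ ^ 2) x c p ^ 2) /
        ∫ v : V, rexp (-(2 * (2 / σ ^ 2)) * ‖v‖ ^ 2) := by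
    rw [integral_gaussianCombination_sq ha, mul_div_cancel_left₀ _ h_int_pos.ne']
    simp only [dotProduct, Matrix.mulVec, gaussianGram, Matrix.of_apply, star_trivial, mul_sum]
    refine sum_congr rfl fun i _ => sum_congr rfl fun j _ => ?_
    rw [show -(2 / σ ^ 2 / 2) * ‖x i - x j‖ ^ 2 = -(‖x i - x j‖ ^ 2 / σ ^ 2) by ring]
    ring
  obtain ⟨p, hp⟩ : ∃ p, gaussianCombination (2 / σ ^ 2) x c p ≠ 0 := by
    by_contra! h
    exact hc (eq_zero_of_gaussianCombination_eq_zero ha.ne' hx (funext h))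
  rw [h_form]
  refine div_pos (integral_pos_of_integrable_nonneg_nonzero (x := p) ?_
    (integrable_gaussianCombination_sq ha x c) (fun p => sq_nonneg _) (pow_ne_zero 2 hp)) h_int_pos
  unfold gaussianCombination
  fun_prop

theorem posDef_gaussianGram {σ : ℝ} (hσ : σ ≠ 0) {x : ι → V} (hx : Injective x) :
    (gaussianGram σ x).PosDef := by
  have := FiniteDimensional.span_of_finite ℝ (Set.finite_range x)
  let x' : ι → Submodule.span ℝ (Set.range x) := fun i => ⟨x i, Submodule.subset_span ⟨i, rfl⟩⟩
  -- `gaussianGram σ x'` is `gaussianGram σ x` by definition: the span carries the ambient norm.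
  exact posDef_gaussianGram_of_finiteDimensional (x := x') hσ
    fun i j h => hx (congrArg Subtype.val h)

end

/-- **Gaussian kernel interpolation of arbitrary labels.**
Let `σ > 0`, `x₁, …, x_N` pairwise distinct points in `ℝⁿ`, and `y₁, …, y_N ∈ ℝ`
arbitrary targets.  Then there exist coefficients `c₁, …, c_N ∈ ℝ` such that
`f(x) = ∑ j, c j * exp (-‖x - x j‖² / σ²)` satisfies `f (x i) = y i` for all `i`. -/
theorem gaussian_kernel_interpolation
    {n N : ℕ}
    (σ : ℝ) (hσ : 0 < σ)
    (x : Fin N → EuclideanSpace ℝ (Fin n))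
    (hx : Function.Injective x)
    (y : Fin N → ℝ) :
    ∃ c : Fin N → ℝ, ∀ i : Fin N,
      (∑ j : Fin N, c j * Real.exp (-(‖x i - x j‖ ^ 2 / σ ^ 2))) = y i := by
  obtain ⟨c, hc⟩ :=
    Matrix.mulVec_surjective_iff_isUnit.2 (posDef_gaussianGram hσ.ne' hx).isUnit y
  exact ⟨c, fun i => by
    simpa [Matrix.mulVec, dotProduct, gaussianGram, mul_comm] using congrFun hc i⟩
end
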